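/- arXiv:1802.04244 — 7 statements merged into one kernel-verified Lean document; each statement's English description precedes it below -/
import Mathlib

section
/- For f(r) = (1 - 2m r^{1-n} + κ r²)^{1/2}, with u-derivatives defined by d/du = f d/dρ, ρ = r²/2, and Φ = (n+1)m r^{-n-3}, the static equation f_{uu} + (n-1)Φ f = 0 holds. -/
/-! Writing `f = √g` with `g = f²`, one has `f f_ρ = g_ρ / 2`, so the static equation reduces to
`f_{uu} = f g_ρρ / 2`. As a function of `ρ`, `g = 1 - 2m (2ρ)^((1-n)/2) + 2κρ`, and the term
`(2ρ)^((1-n)/2)` has second derivative `(n²-1) (2ρ)^((-3-n)/2) = (n²-1) r^(-n-3)`,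
which gives `g_ρρ / 2 = -(n²-1) m r^(-n-3) = -(n-1) Φ`. -/

open Real Filter Topology

theorem deriv_mul_deriv_eq_half_deriv_deriv {F G : ℝ → ℝ} {p : ℝ}
    (h : ∀ᶠ q in 𝓝 p, F q = √(G q) ∧ 0 < G q ∧ DifferentiableAt ℝ G q) :
    deriv (fun q => F q * deriv F q) p = deriv (deriv G) p / 2 := by
  have hFF' : (fun q => F q * deriv F q) =ᶠ[𝓝 p] fun q => deriv G q / 2 := by
    filter_upwards [h.eventually_nhds] with q hq
    obtain ⟨hFq, hGq, hdiff⟩ := hq.self_of_nhds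
    have hFeq : F =ᶠ[𝓝 q] fun x => √(G x) := hq.mono fun x hx => hx.1
    have hsqrt : √(G q) ≠ 0 := sqrt_ne_zero'.mpr hGq
    rw [hFeq.deriv_eq, hFq, deriv_sqrt hdiff hGq.ne']
    field_simp
  rw [hFF'.deriv_eq, deriv_div_const]

theorem hasDerivAt_mul_rpow_const {c a p : ℝ} (h : c * p ≠ 0) :
    HasDerivAt (fun q => (c * q) ^ a) (c * a * (c * p) ^ (a - 1)) p := by
  simpa using ((hasDerivAt_id p).const_mul c).rpow_const (p := a) (Or.inl h)

/-- `f²` as a function of `ρ = r²/2`, with `r^(1-n) = (2ρ)^e` for `e = (1-n)/2`. -/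
noncomputable def lapseSq (m κ e ρ : ℝ) : ℝ :=
  1 - 2 * m * (2 * ρ) ^ e + κ * (2 * ρ)

theorem hasDerivAt_lapseSq (m κ e : ℝ) {ρ : ℝ} (hρ : 0 < ρ) :
    HasDerivAt (lapseSq m κ e) (-(4 * m * e) * (2 * ρ) ^ (e - 1) + 2 * κ) ρ := by
  have hpow := hasDerivAt_mul_rpow_const (c := 2) (a := e) (p := ρ) (by positivity)
  have hlin : HasDerivAt (fun q : ℝ => 2 * q) 2 ρ := by
    simpa using (hasDerivAt_id ρ).const_mul 2
  exact (((hpow.const_mul (2 * m)).const_sub 1).add (hlin.const_mul κ)).congr_deriv (by ring)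

theorem deriv_deriv_lapseSq (m κ e : ℝ) {ρ : ℝ} (hρ : 0 < ρ) :
    deriv (deriv (lapseSq m κ e)) ρ = -(8 * m * e * (e - 1)) * (2 * ρ) ^ (e - 2) := by
  have hderiv : deriv (lapseSq m κ e) =ᶠ[𝓝 ρ]
      fun q => -(4 * m * e) * (2 * q) ^ (e - 1) + 2 * κ :=
    (eventually_gt_nhds hρ).mono fun q hq => (hasDerivAt_lapseSq m κ e hq).deriv
  have hpow := hasDerivAt_mul_rpow_const (c := 2) (a := e - 1) (p := ρ) (by positivity)
  rw [hderiv.deriv_eq, ((hpow.const_mul _).add_const _).deriv, show e - 1 - 1 = e - 2 by ring]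
  ring

theorem stmt4_general (n : ℕ) (m κ : ℝ) (r : ℝ) (hr : 0 < r)
    (hpos : 0 < 1 - 2 * m * r ^ ((1 : ℝ) - n) + κ * r ^ (2 : ℕ))
    (F : ℝ → ℝ)
    (hF : F = fun p : ℝ =>
      Real.sqrt (1 - 2 * m * (Real.sqrt (2 * p)) ^ ((1 : ℝ) - n) + κ * (2 * p))) :
    F (r ^ (2 : ℕ) / 2) * deriv (fun p => F p * deriv F p) (r ^ (2 : ℕ) / 2)
      + ((n : ℝ) - 1) * (((n : ℝ) + 1) * m * r ^ (-(n : ℝ) - 3)) * F (r ^ (2 : ℕ) / 2)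
        = 0 := by
  set e : ℝ := (1 - n) / 2
  have hFsqrt : ∀ p, 0 < p → F p = √(lapseSq m κ e p) := fun p hp => by
    rw [hF, lapseSq, rpow_div_two_eq_sqrt _ (by positivity)]
  have hr2 : ∀ b : ℝ, (2 * (r ^ (2 : ℕ) / 2)) ^ b = r ^ (2 * b) := fun b => by
    rw [mul_div_cancel₀ _ two_ne_zero]
    exact_mod_cast (rpow_natCast_mul hr.le 2 b).symm
  have hρ : 0 < r ^ (2 : ℕ) / 2 := by positivity
  have hg : 0 < lapseSq m κ e (r ^ (2 : ℕ) / 2) := by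
    rw [lapseSq, hr2, show 2 * e = 1 - n by ring, mul_div_cancel₀ _ two_ne_zero]
    exact hpos
  have hnear : ∀ᶠ q in 𝓝 (r ^ (2 : ℕ) / 2),
      F q = √(lapseSq m κ e q) ∧ 0 < lapseSq m κ e q ∧ DifferentiableAt ℝ (lapseSq m κ e) q := by
    filter_upwards [eventually_gt_nhds hρ,
      (hasDerivAt_lapseSq m κ e hρ).continuousAt.eventually (eventually_gt_nhds hg)]
      with q hq hgq
    exact ⟨hFsqrt q hq, hgq, (hasDerivAt_lapseSq m κ e hq).differentiableAt⟩
  rw [deriv_mul_deriv_eq_half_deriv_deriv hnear, deriv_deriv_lapseSq m κ e hρ, hr2,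
    show 2 * (e - 2) = -(n : ℝ) - 3 by ring]
  ring

/-- for `f(r) = (1 - 2 m r^{1-n} + κ r²)^{1/2}`, viewed as a function of
`ρ = r²/2` via `r = √(2ρ)`, with `u`-derivatives `g_u = f g_ρ` (so `f_{uu} = f (f f_ρ)_ρ`)
and `Φ = (n+1) m r^{-n-3}`, the static equation `f_{uu} + (n-1) Φ f = 0` holds. -/
theorem stmt4 (n : ℕ) (hn : 2 ≤ n) (m κ : ℝ) (r : ℝ) (hr : 0 < r)
    (hpos : 0 < 1 - 2 * m * r ^ ((1 : ℝ) - n) + κ * r ^ (2 : ℕ))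
    (F : ℝ → ℝ)
    (hF : F = fun p : ℝ =>
      Real.sqrt (1 - 2 * m * (Real.sqrt (2 * p)) ^ ((1 : ℝ) - n) + κ * (2 * p))) :
    F (r ^ (2 : ℕ) / 2) * deriv (fun p => F p * deriv F p) (r ^ (2 : ℕ) / 2)
      + ((n : ℝ) - 1) * (((n : ℝ) + 1) * m * r ^ (-(n : ℝ) - 3)) * F (r ^ (2 : ℕ) / 2)
        = 0 :=
  stmt4_general n m κ r hr hpos F hF
end

section
/- Let f > 0 be smooth on [u₀, u₁] and let w solve w_{uu} + (n-1)Φ w = 0 with w(u₀) > 0, w_u(u₀) > 0, and w_u(u₀)f(u₀) - w(u₀)f_u(u₀) ≥ 0. Assume f_{uu} + (n-1)Φ f ≤ 0 on [u₀, u₁]. Then w > 0 on [u₀, u₁] and w_u f - w f_u ≥ 0 on [u₀, u₁]; consequently w/f is nondecreasing on [u₀, u₁]. -/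
/-- if `w'' + (n-1)Φw = 0` with `w(u₀) > 0`, `w'(u₀) > 0`,
`w'(u₀)f(u₀) - w(u₀)f'(u₀) ≥ 0`, and `f > 0` satisfies `f'' + (n-1)Φf ≤ 0` on `[u₀,u₁]`,
then `w > 0` and `w'f - wf' ≥ 0` on `[u₀,u₁]`; consequently `w/f` is nondecreasing. -/
theorem stmt6 (u₀ u₁ : ℝ) (h01 : u₀ ≤ u₁) (n : ℕ) (hn : 2 ≤ n)
    (w f Φ : ℝ → ℝ) (hw : ContDiff ℝ (⊤ : ℕ∞) w) (hf : ContDiff ℝ (⊤ : ℕ∞) f) (hΦ : Continuous Φ)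
    (hfpos : ∀ u ∈ Set.Icc u₀ u₁, 0 < f u)
    (hODE : ∀ u ∈ Set.Icc u₀ u₁, deriv (deriv w) u + ((n : ℝ) - 1) * Φ u * w u = 0)
    (hstatic : ∀ u ∈ Set.Icc u₀ u₁,
      deriv (deriv f) u + ((n : ℝ) - 1) * Φ u * f u ≤ 0)
    (hw0 : 0 < w u₀) (hw0' : 0 < deriv w u₀)
    (hinit : 0 ≤ deriv w u₀ * f u₀ - w u₀ * deriv f u₀) :
    (∀ u ∈ Set.Icc u₀ u₁, 0 < w u)
      ∧ (∀ u ∈ Set.Icc u₀ u₁, 0 ≤ deriv w u * f u - w u * deriv f u)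
      ∧ MonotoneOn (fun u => w u / f u) (Set.Icc u₀ u₁) := by
  have hwD : Differentiable ℝ w := hw.differentiable (by simp)
  have hfD : Differentiable ℝ f := hf.differentiable (by simp)
  have hwI : ContDiff ℝ ((⊤:ℕ∞):WithTop ℕ∞) w := hw.of_le (by simp)
  have hfI : ContDiff ℝ ((⊤:ℕ∞):WithTop ℕ∞) f := hf.of_le (by simp)
  have hwD2 : Differentiable ℝ (deriv w) :=
    ((contDiff_infty_iff_deriv.mp hwI).2).differentiable (by simp)
  have hfD2 : Differentiable ℝ (deriv f) :=
    ((contDiff_infty_iff_deriv.mp hfI).2).differentiable (by simp)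
  set W : ℝ → ℝ := fun u => deriv w u * f u - w u * deriv f u with hWdef
  have hWd : ∀ u, HasDerivAt W (deriv (deriv w) u * f u - w u * deriv (deriv f) u) u := by
    intro u
    have h1 : HasDerivAt (fun u => deriv w u * f u)
        (deriv (deriv w) u * f u + deriv w u * deriv f u) u :=
      ((hwD2 u).hasDerivAt).mul ((hfD u).hasDerivAt)
    have h2 : HasDerivAt (fun u => w u * deriv f u)
        (deriv w u * deriv f u + w u * deriv (deriv f) u) u :=
      ((hwD u).hasDerivAt).mul ((hfD2 u).hasDerivAt)
    have := h1.sub h2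
    exact this.congr_deriv (by ring)
  have hWdiff : Differentiable ℝ W := fun u => (hWd u).differentiableAt
  have hWderiv : ∀ u, deriv W u = deriv (deriv w) u * f u - w u * deriv (deriv f) u :=
    fun u => (hWd u).deriv
  have hWnn : ∀ u ∈ Set.Icc u₀ u₁, 0 ≤ w u → 0 ≤ deriv W u := by
    intro u hu hwu
    rw [hWderiv]
    have h1 := hODE u hu
    have h2 := hstatic u hu
    nlinarith [mul_le_mul_of_nonneg_left h2 hwu, hfpos u hu]
  have hfd : ∀ u, HasDerivAt f (deriv f u) u := fun u => (hfD u).hasDerivAt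
  -- key lemma
  have key : ∀ t ∈ Set.Icc u₀ u₁, (∀ s ∈ Set.Icc u₀ t, 0 ≤ w s) →
      (∀ s ∈ Set.Icc u₀ t, 0 ≤ W s) ∧
      MonotoneOn (fun u => w u / f u) (Set.Icc u₀ t) := by
    intro t ht hwnn
    have hsub : Set.Icc u₀ t ⊆ Set.Icc u₀ u₁ := Set.Icc_subset_Icc le_rfl ht.2
    have hWmono : MonotoneOn W (Set.Icc u₀ t) := by
      apply monotoneOn_of_deriv_nonneg (convex_Icc _ _) hWdiff.continuous.continuousOn
        (fun s hs => (hWdiff s).differentiableWithinAt)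
      intro s hs
      rw [interior_Icc] at hs
      exact hWnn s (hsub (Set.Ioo_subset_Icc_self hs))
        (hwnn s (Set.Ioo_subset_Icc_self hs))
    have hu₀mem : u₀ ∈ Set.Icc u₀ t := Set.left_mem_Icc.mpr ht.1
    have hWge : ∀ s ∈ Set.Icc u₀ t, 0 ≤ W s := by
      intro s hs
      exact le_trans hinit (hWmono hu₀mem hs hs.1)
    refine ⟨hWge, ?_⟩
    apply monotoneOn_of_deriv_nonneg (convex_Icc _ _)
    · exact ContinuousOn.div hwD.continuous.continuousOn hfD.continuous.continuousOn
        (fun s hs => (hfpos s (hsub hs)).ne')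
    · intro s hs
      rw [interior_Icc] at hs
      have hne : f s ≠ 0 := (hfpos s (hsub (Set.Ioo_subset_Icc_self hs))).ne'
      exact (((hwD s).hasDerivAt).div (hfd s) hne).differentiableAt.differentiableWithinAt
    · intro s hs
      rw [interior_Icc] at hs
      have hne : f s ≠ 0 := (hfpos s (hsub (Set.Ioo_subset_Icc_self hs))).ne'
      have hd := (((hwD s).hasDerivAt).div (hfd s) hne).deriv
      rw [show (fun u => w u / f u) = w / f from rfl, hd]
      have := hWge s (Set.Ioo_subset_Icc_self hs)
      positivity
  -- positivity of w
  have hwpos : ∀ u ∈ Set.Icc u₀ u₁, 0 < w u := by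
    by_contra h
    push_neg at h
    obtain ⟨t₁, ht₁, hwt₁⟩ := h
    set T : Set ℝ := Set.Icc u₀ u₁ ∩ {t | w t ≤ 0} with hTdef
    have hTne : T.Nonempty := ⟨t₁, ht₁, hwt₁⟩
    have hTbdd : BddBelow T := ⟨u₀, fun x hx => hx.1.1⟩
    have hTclosed : IsClosed T :=
      isClosed_Icc.inter (isClosed_le hw.continuous continuous_const)
    have htT : sInf T ∈ T := hTclosed.csInf_mem hTne hTbdd
    set t := sInf T with htdef
    have ht01 : t ∈ Set.Icc u₀ u₁ := htT.1
    have hwt : w t ≤ 0 := htT.2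
    have ht0 : u₀ < t := by
      rcases lt_or_eq_of_le ht01.1 with h | h
      · exact h
      · exfalso; rw [← h] at hwt; linarith
    have hlt : ∀ s ∈ Set.Ico u₀ t, 0 < w s := by
      intro s hs
      by_contra hc
      push_neg at hc
      have : s ∈ T := ⟨⟨hs.1, le_trans hs.2.le ht01.2⟩, hc⟩
      exact absurd (csInf_le hTbdd this) (not_le.mpr hs.2)
    have hwt_nonneg : 0 ≤ w t := by
      have htend : Filter.Tendsto w (nhdsWithin t (Set.Iio t)) (nhds (w t)) :=
        (hw.continuous.tendsto t).mono_left nhdsWithin_le_nhds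
      apply ge_of_tendsto htend
      filter_upwards [Ioo_mem_nhdsLT_of_mem (Set.mem_Ioc.mpr ⟨ht0, le_rfl⟩)] with s hs
      exact (hlt s ⟨hs.1.le, hs.2⟩).le
    have hwnn : ∀ s ∈ Set.Icc u₀ t, 0 ≤ w s := by
      intro s hs
      rcases lt_or_eq_of_le hs.2 with h | h
      · exact (hlt s ⟨hs.1, h⟩).le
      · rw [h]; exact hwt_nonneg
    obtain ⟨_, hmono⟩ := key t ht01 hwnn
    have hle := hmono (Set.left_mem_Icc.mpr ht01.1) (Set.right_mem_Icc.mpr ht01.1) ht01.1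
    have h1 : 0 < w u₀ / f u₀ := div_pos hw0 (hfpos u₀ (Set.left_mem_Icc.mpr h01))
    have h2 : w t / f t ≤ 0 := div_nonpos_of_nonpos_of_nonneg hwt (hfpos t ht01).le
    simp only at hle
    linarith
  have hu₁mem : u₁ ∈ Set.Icc u₀ u₁ := Set.right_mem_Icc.mpr h01
  obtain ⟨hWge, hmono⟩ := key u₁ hu₁mem (fun s hs => (hwpos s hs).le)
  exact ⟨hwpos, hWge, hmono⟩
end

section
/- If w solves w_{uu} + (n-1)Φ w = 0 with f_{uu} + (n-1)Φ f ≤ 0 and the initial conditions w(u₀) > 0, w_u(u₀) > 0, and strict inequality w_u(u₀)f(u₀) - w(u₀)f_u(u₀) > 0, then w_u f - w f_u > 0 on all of [u₀, u₁], so w/f is strictly increasing. -/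
/-- if `w'' + (n-1)Φw = 0`, `f'' + (n-1)Φf ≤ 0`, with `w(u₀) > 0`,
`w'(u₀) > 0` and strict inequality `w'(u₀)f(u₀) - w(u₀)f'(u₀) > 0`, then
`w'f - wf' > 0` on all of `[u₀,u₁]`, so `w/f` is strictly increasing. -/
theorem stmt8 (u₀ u₁ : ℝ) (h01 : u₀ ≤ u₁) (n : ℕ) (hn : 2 ≤ n)
    (w f Φ : ℝ → ℝ) (hw : ContDiff ℝ (⊤ : ℕ∞) w) (hf : ContDiff ℝ (⊤ : ℕ∞) f) (hΦ : Continuous Φ)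
    (hfpos : ∀ u ∈ Set.Icc u₀ u₁, 0 < f u)
    (hODE : ∀ u ∈ Set.Icc u₀ u₁, deriv (deriv w) u + ((n : ℝ) - 1) * Φ u * w u = 0)
    (hstatic : ∀ u ∈ Set.Icc u₀ u₁,
      deriv (deriv f) u + ((n : ℝ) - 1) * Φ u * f u ≤ 0)
    (hw0 : 0 < w u₀) (hw0' : 0 < deriv w u₀)
    (hinit : 0 < deriv w u₀ * f u₀ - w u₀ * deriv f u₀) :
    (∀ u ∈ Set.Icc u₀ u₁, 0 < deriv w u * f u - w u * deriv f u)
      ∧ StrictMonoOn (fun u => w u / f u) (Set.Icc u₀ u₁) := by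
  have hdw : Differentiable ℝ w := hw.differentiable (by simp)
  have hdf : Differentiable ℝ f := hf.differentiable (by simp)
  have hw' : ContDiff ℝ ((⊤ : ℕ∞) : WithTop ℕ∞) (deriv w) := (contDiff_infty_iff_deriv.mp (hw.of_le (by simp))).2
  have hf' : ContDiff ℝ ((⊤ : ℕ∞) : WithTop ℕ∞) (deriv f) := (contDiff_infty_iff_deriv.mp (hf.of_le (by simp))).2
  have hdw' : Differentiable ℝ (deriv w) := hw'.differentiable (by simp)
  have hdf' : Differentiable ℝ (deriv f) := hf'.differentiable (by simp)
  set W : ℝ → ℝ := fun u => deriv w u * f u - w u * deriv f u with hWdef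
  -- the Wronskian is differentiable with derivative w''f - wf''
  have hWd : ∀ x : ℝ, HasDerivAt W
      (deriv (deriv w) x * f x - w x * deriv (deriv f) x) x := by
    intro x
    have h1 := ((hdw' x).hasDerivAt.fun_mul (hdf x).hasDerivAt)
    have h2 := ((hdw x).hasDerivAt.fun_mul (hdf' x).hasDerivAt)
    have h3 := h1.fun_sub h2
    refine h3.congr_deriv ?_
    ring
  have hWcont : Continuous W :=
    (hdw'.continuous.mul hdf.continuous).sub (hdw.continuous.mul hdf'.continuous)
  -- key: if w ≥ 0 on [u₀,t] ⊆ [u₀,u₁], then W > 0 on [u₀,t]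
  have key : ∀ t, t ∈ Set.Icc u₀ u₁ → (∀ u ∈ Set.Icc u₀ t, 0 ≤ w u) →
      ∀ u ∈ Set.Icc u₀ t, 0 < W u := by
    intro t ht hwnn
    have hsub : Set.Icc u₀ t ⊆ Set.Icc u₀ u₁ := Set.Icc_subset_Icc le_rfl ht.2
    have hmono : MonotoneOn W (Set.Icc u₀ t) := by
      apply monotoneOn_of_deriv_nonneg (convex_Icc _ _) hWcont.continuousOn
      · exact fun x _ => ((hWd x).differentiableAt).differentiableWithinAt
      · intro x hx
        rw [interior_Icc] at hx
        have hx' : x ∈ Set.Icc u₀ t := Set.Ioo_subset_Icc_self hx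
        have hx'' : x ∈ Set.Icc u₀ u₁ := hsub hx'
        rw [(hWd x).deriv]
        have hODEx := hODE x hx''
        have hstx := hstatic x hx''
        have hwx : 0 ≤ w x := hwnn x hx'
        have hODE2 : deriv (deriv w) x = -(((n : ℝ) - 1) * Φ x * w x) := by linarith
        rw [hODE2]
        nlinarith [mul_nonneg hwx (neg_nonneg.mpr hstx)]
    intro u hu
    have h0 : u₀ ∈ Set.Icc u₀ t := Set.left_mem_Icc.mpr (hu.1.trans hu.2)
    have := hmono h0 hu hu.1
    calc (0:ℝ) < W u₀ := hinit
      _ ≤ W u := this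
  -- strict monotonicity of w/f on [u₀,t] once W > 0 there
  have hsm : ∀ t, t ∈ Set.Icc u₀ u₁ → (∀ u ∈ Set.Icc u₀ t, 0 < W u) →
      StrictMonoOn (fun u => w u / f u) (Set.Icc u₀ t) := by
    intro t ht hWpos
    have hsub : Set.Icc u₀ t ⊆ Set.Icc u₀ u₁ := Set.Icc_subset_Icc le_rfl ht.2
    apply strictMonoOn_of_deriv_pos (convex_Icc _ _)
    · apply ContinuousOn.div (hdw.continuous.continuousOn) (hdf.continuous.continuousOn)
      intro x hx
      exact (hfpos x (hsub hx)).ne'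
    · intro x hx
      rw [interior_Icc] at hx
      have hx' : x ∈ Set.Icc u₀ t := Set.Ioo_subset_Icc_self hx
      have hfx : 0 < f x := hfpos x (hsub hx')
      rw [deriv_fun_div (hdw x) (hdf x) hfx.ne']
      exact div_pos (hWpos x hx') (by positivity)
  -- w > 0 on [u₀,u₁]
  have hwpos : ∀ u ∈ Set.Icc u₀ u₁, 0 < w u := by
    by_contra hcon
    push_neg at hcon
    obtain ⟨s, hs, hws⟩ := hcon
    set S : Set ℝ := Set.Icc u₀ u₁ ∩ w ⁻¹' Set.Iic 0 with hSdef
    have hSclosed : IsClosed S := isClosed_Icc.inter (isClosed_Iic.preimage hdw.continuous)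
    have hSne : S.Nonempty := ⟨s, hs, hws⟩
    have hSbdd : BddBelow S := ⟨u₀, fun x hx => hx.1.1⟩
    set t := sInf S with htdef
    have htS : t ∈ S := hSclosed.csInf_mem hSne hSbdd
    have ht : t ∈ Set.Icc u₀ u₁ := htS.1
    have hwt : w t ≤ 0 := htS.2
    have h0t : u₀ < t := by
      rcases eq_or_lt_of_le ht.1 with h | h
      · exact absurd hwt (by rw [← h]; exact not_le.mpr hw0)
      · exact h
    -- w > 0 on [u₀, t)
    have hwlt : ∀ u ∈ Set.Ico u₀ t, 0 < w u := by
      intro u hu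
      by_contra hwu
      push_neg at hwu
      have huS : u ∈ S := ⟨⟨hu.1, hu.2.le.trans ht.2⟩, hwu⟩
      exact absurd (csInf_le hSbdd huS) (not_le.mpr hu.2)
    -- w ≥ 0 on [u₀, t] (at t by continuity)
    have hwnn : ∀ u ∈ Set.Icc u₀ t, 0 ≤ w u := by
      intro u hu
      rcases eq_or_lt_of_le hu.2 with h | h
      · rw [h]
        have hcl : IsClosed {x : ℝ | 0 ≤ w x} := isClosed_le continuous_const hdw.continuous
        have hsub2 : Set.Ioo u₀ t ⊆ {x : ℝ | 0 ≤ w x} :=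
          fun x hx => (hwlt x ⟨hx.1.le, hx.2⟩).le
        have hcls : closure (Set.Ioo u₀ t) ⊆ {x : ℝ | 0 ≤ w x} :=
          hcl.closure_subset_iff.mpr hsub2
        have hu' : t ∈ closure (Set.Ioo u₀ t) := by
          rw [closure_Ioo (ne_of_lt h0t)]
          exact Set.right_mem_Icc.mpr h0t.le
        exact hcls hu'
      · exact (hwlt u ⟨hu.1, h⟩).le
    have hWpos := key t ht hwnn
    have hsmt := hsm t ht hWpos
    have hlt := hsmt (Set.left_mem_Icc.mpr h0t.le) (Set.right_mem_Icc.mpr h0t.le) h0t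
    have h1 : 0 < w u₀ / f u₀ := div_pos hw0 (hfpos u₀ ⟨le_rfl, h01⟩)
    have h2 : w t / f t ≤ 0 := div_nonpos_iff.mpr (Or.inr ⟨hwt, (hfpos t ht).le⟩)
    simp only at hlt
    linarith
  have hWpos := key u₁ (Set.right_mem_Icc.mpr h01) (fun u hu => (hwpos u hu).le)
  exact ⟨hWpos, hsm u₁ (Set.right_mem_Icc.mpr h01) hWpos⟩
end

section
/- Let f, w be continuous positive functions on an interval with w/f strictly increasing and Φ > 0 continuous. If u ≠ ũ are in the interval, then f(u)∫_u^{ũ} w(s)Φ(s) ds - w(u)∫_u^{ũ} f(s)Φ(s) ds and w(ũ)∫_u^{ũ} f(s)Φ(s) ds - f(ũ)∫_u^{ũ} w(s)Φ(s) ds are both strictly positive when u < ũ (and both strictly positive with the orientation of the integral accounted for when ũ < u); in particular their sum vanishes only if u = ũ. -/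
/-! Since `f p * ∫ wΦ - w p * ∫ fΦ = ∫ (f p * w s - w p * f s) * Φ s` and
`f p * w s - w p * f s = f p * f s * (w s / f s - w p / f p)` has the sign of `s - p`,
this combination is positive over `[a, b]` when `p = a` and negative when `p = b`.
Reversing the orientation of the integral handles `ũ < u`. -/

open MeasureTheory intervalIntegral Set

lemma mul_sub_mul_pos_of_div_lt_div {fp fs wp ws : ℝ} (hfp : 0 < fp) (hfs : 0 < fs)
    (h : wp / fp < ws / fs) : 0 < fp * ws - wp * fs := by
  rw [div_lt_div_iff₀ hfp hfs] at h
  linarith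

lemma integral_const_mul_sub_const_mul_pos {f w Φ : ℝ → ℝ} {a b c d : ℝ} (hab : a < b)
    (hf : ContinuousOn f (Icc a b)) (hw : ContinuousOn w (Icc a b))
    (hΦ : ContinuousOn Φ (Icc a b)) (hΦpos : ∀ s ∈ Ioo a b, 0 < Φ s)
    (hpos : ∀ s ∈ Ioo a b, 0 < c * w s - d * f s) :
    0 < c * (∫ s in a..b, w s * Φ s) - d * ∫ s in a..b, f s * Φ s := by
  rw [← uIcc_of_le hab.le] at hf hw hΦ
  have hwΦ : IntervalIntegrable (fun s => w s * Φ s) volume a b :=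
    (hw.mul hΦ).intervalIntegrable
  have hfΦ : IntervalIntegrable (fun s => f s * Φ s) volume a b :=
    (hf.mul hΦ).intervalIntegrable
  have hcomb : c * (∫ s in a..b, w s * Φ s) - d * ∫ s in a..b, f s * Φ s
      = ∫ s in a..b, (c * w s - d * f s) * Φ s := by
    rw [← intervalIntegral.integral_const_mul, ← intervalIntegral.integral_const_mul,
      ← integral_sub (hwΦ.const_mul c) (hfΦ.const_mul d)]
    congr 1 with s
    ring
  rw [hcomb]
  refine intervalIntegral_pos_of_pos_on ?_ (fun s hs => mul_pos (hpos s hs) (hΦpos s hs)) hab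
  exact (((continuousOn_const.mul hw).sub (continuousOn_const.mul hf)).mul hΦ).intervalIntegrable

section RatioStrictMono

variable {J : Set ℝ} {f w Φ : ℝ → ℝ} {a b : ℝ}

lemma integral_combination_pos_at_left (hJ : J.OrdConnected)
    (hf : ContinuousOn f J) (hw : ContinuousOn w J) (hΦ : ContinuousOn Φ J)
    (hfpos : ∀ s ∈ J, 0 < f s) (hΦpos : ∀ s ∈ J, 0 < Φ s)
    (hmono : StrictMonoOn (fun s => w s / f s) J) (ha : a ∈ J) (hb : b ∈ J) (hab : a < b) :
    0 < f a * (∫ s in a..b, w s * Φ s) - w a * ∫ s in a..b, f s * Φ s := by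
  have hsub : Icc a b ⊆ J := hJ.out ha hb
  refine integral_const_mul_sub_const_mul_pos hab (hf.mono hsub) (hw.mono hsub)
    (hΦ.mono hsub) (fun s hs => hΦpos s (hsub (Ioo_subset_Icc_self hs))) fun s hs => ?_
  have hsJ : s ∈ J := hsub (Ioo_subset_Icc_self hs)
  exact mul_sub_mul_pos_of_div_lt_div (hfpos a ha) (hfpos s hsJ) (hmono ha hsJ hs.1)

lemma integral_combination_neg_at_right (hJ : J.OrdConnected)
    (hf : ContinuousOn f J) (hw : ContinuousOn w J) (hΦ : ContinuousOn Φ J)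
    (hfpos : ∀ s ∈ J, 0 < f s) (hΦpos : ∀ s ∈ J, 0 < Φ s)
    (hmono : StrictMonoOn (fun s => w s / f s) J) (ha : a ∈ J) (hb : b ∈ J) (hab : a < b) :
    f b * (∫ s in a..b, w s * Φ s) - w b * ∫ s in a..b, f s * Φ s < 0 := by
  have hsub : Icc a b ⊆ J := hJ.out ha hb
  have := integral_const_mul_sub_const_mul_pos (c := -f b) (d := -w b) hab (hf.mono hsub)
    (hw.mono hsub) (hΦ.mono hsub) (fun s hs => hΦpos s (hsub (Ioo_subset_Icc_self hs)))
    fun s hs => by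
      have hsJ : s ∈ J := hsub (Ioo_subset_Icc_self hs)
      have := mul_sub_mul_pos_of_div_lt_div (hfpos s hsJ) (hfpos b hb) (hmono hsJ hb hs.2)
      linarith
  linarith

end RatioStrictMono

theorem stmt11_general (J : Set ℝ) (hJ : J.OrdConnected) (f w Φ : ℝ → ℝ)
    (hf : ContinuousOn f J) (hw : ContinuousOn w J) (hΦ : ContinuousOn Φ J)
    (hfpos : ∀ s ∈ J, 0 < f s) (hΦpos : ∀ s ∈ J, 0 < Φ s)
    (hmono : StrictMonoOn (fun s => w s / f s) J)
    (u ut : ℝ) (hu : u ∈ J) (hut : ut ∈ J) :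
    (u ≠ ut →
        0 < f u * (∫ s in u..ut, w s * Φ s) - w u * (∫ s in u..ut, f s * Φ s)
          ∧ 0 < w ut * (∫ s in u..ut, f s * Φ s) - f ut * ∫ s in u..ut, w s * Φ s)
      ∧ ((f u * (∫ s in u..ut, w s * Φ s) - w u * (∫ s in u..ut, f s * Φ s))
            + (w ut * (∫ s in u..ut, f s * Φ s) - f ut * ∫ s in u..ut, w s * Φ s) = 0
          → u = ut) := by
  have both_pos : u ≠ ut →
      0 < f u * (∫ s in u..ut, w s * Φ s) - w u * (∫ s in u..ut, f s * Φ s)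
        ∧ 0 < w ut * (∫ s in u..ut, f s * Φ s) - f ut * ∫ s in u..ut, w s * Φ s := by
    intro hne
    rcases hne.lt_or_gt with h | h
    · have hleft := integral_combination_pos_at_left hJ hf hw hΦ hfpos hΦpos hmono hu hut h
      have hright := integral_combination_neg_at_right hJ hf hw hΦ hfpos hΦpos hmono hu hut h
      constructor <;> linarith
    · have hleft := integral_combination_pos_at_left hJ hf hw hΦ hfpos hΦpos hmono hut hu h
      have hright := integral_combination_neg_at_right hJ hf hw hΦ hfpos hΦpos hmono hut hu h
      rw [integral_symm ut u, integral_symm ut u]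
      constructor <;> linarith
  refine ⟨both_pos, fun hsum => ?_⟩
  by_contra hne
  obtain ⟨h1, h2⟩ := both_pos hne
  linarith

/-- if `f, w > 0`, `w/f` is strictly increasing and `Φ > 0` on an interval
`J`, then for `u ≠ ut` in `J` the quantities `f(u)∫_u^ut wΦ - w(u)∫_u^ut fΦ` and
`w(ut)∫_u^ut fΦ - f(ut)∫_u^ut wΦ` (oriented integrals) are both strictly positive;
in particular their sum vanishes only if `u = ut`. -/
theorem stmt11 (J : Set ℝ) (hJ : J.OrdConnected) (f w Φ : ℝ → ℝ)
    (hf : ContinuousOn f J) (hw : ContinuousOn w J) (hΦ : ContinuousOn Φ J)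
    (hfpos : ∀ s ∈ J, 0 < f s) (hwpos : ∀ s ∈ J, 0 < w s) (hΦpos : ∀ s ∈ J, 0 < Φ s)
    (hmono : StrictMonoOn (fun s => w s / f s) J)
    (u ut : ℝ) (hu : u ∈ J) (hut : ut ∈ J) :
    (u ≠ ut →
        0 < f u * (∫ s in u..ut, w s * Φ s) - w u * (∫ s in u..ut, f s * Φ s)
          ∧ 0 < w ut * (∫ s in u..ut, f s * Φ s) - f ut * ∫ s in u..ut, w s * Φ s)
      ∧ ((f u * (∫ s in u..ut, w s * Φ s) - w u * (∫ s in u..ut, f s * Φ s))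
            + (w ut * (∫ s in u..ut, f s * Φ s) - f ut * ∫ s in u..ut, w s * Φ s) = 0
          → u = ut) :=
  stmt11_general J hJ f w Φ hf hw hΦ hfpos hΦpos hmono u ut hu hut
end

section
/- Let A and B be symmetric 2×2 real matrices. If A is positive definite and tr(adj(A)·B) = A₁₁B₂₂ + A₂₂B₁₁ - 2A₁₂B₁₂ = 0, then det B = B₁₁B₂₂ - B₁₂² ≤ 0. Moreover, det B = 0 if and only if B = 0. -/
/-- if `A` is a symmetric positive definite 2×2 matrix, `B` symmetric,
and `A₁₁B₂₂ + A₂₂B₁₁ - 2A₁₂B₁₂ = 0`, then `det B = B₁₁B₂₂ - B₁₂² ≤ 0`, with equality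
iff `B = 0`. -/
theorem stmt12 (A B : Matrix (Fin 2) (Fin 2) ℝ) (hAs : A.IsSymm) (hBs : B.IsSymm)
    (hA : A.PosDef)
    (hpair : A 0 0 * B 1 1 + A 1 1 * B 0 0 - 2 * A 0 1 * B 0 1 = 0) :
    B 0 0 * B 1 1 - (B 0 1) ^ 2 ≤ 0
      ∧ (B 0 0 * B 1 1 - (B 0 1) ^ 2 = 0 ↔ B = 0) := by
  have hA10 : A 1 0 = A 0 1 := (hAs.apply 1 0).symm
  have hB10 : B 1 0 = B 0 1 := (hBs.apply 1 0).symm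
  have hdet := hA.det_pos
  rw [Matrix.det_fin_two, hA10] at hdet
  have h00 : 0 < A 0 0 := by
    have := hA.dotProduct_mulVec_pos (x := ![1, 0]) (by simp)
    simpa [dotProduct, Matrix.mulVec, Fin.sum_univ_two] using this
  have h11 : 0 < A 1 1 := by
    have := hA.dotProduct_mulVec_pos (x := ![0, 1]) (by simp)
    simpa [dotProduct, Matrix.mulVec, Fin.sum_univ_two] using this
  have hsq : (A 0 0 * B 1 1 + A 1 1 * B 0 0) ^ 2 = 4 * (A 0 1) ^ 2 * (B 0 1) ^ 2 := by
    have h2 : A 0 0 * B 1 1 + A 1 1 * B 0 0 = 2 * A 0 1 * B 0 1 := by linarith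
    rw [h2]; ring
  have hineq : B 0 0 * B 1 1 - (B 0 1) ^ 2 ≤ 0 := by
    nlinarith [sq_nonneg (A 0 0 * B 1 1 - A 1 1 * B 0 0), sq_nonneg (B 0 1),
      mul_pos h00 h11, mul_nonneg hdet.le (sq_nonneg (B 0 1)), hsq]
  refine ⟨hineq, ?_, ?_⟩
  · intro hz
    have hq2 : (B 0 1) ^ 2 ≤ 0 := by
      nlinarith [sq_nonneg (A 0 0 * B 1 1 - A 1 1 * B 0 0), mul_pos h00 h11,
        mul_nonneg hdet.le (sq_nonneg (B 0 1)), hsq]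
    have hq : B 0 1 = 0 := by
      have := sq_nonneg (B 0 1)
      have : (B 0 1) ^ 2 = 0 := le_antisymm hq2 this
      exact pow_eq_zero_iff (by norm_num) |>.mp this
    rw [hq] at hpair hz
    have hpr : B 0 0 * B 1 1 = 0 := by linarith
    have hp0 : B 0 0 = 0 ∧ B 1 1 = 0 := by
      rcases mul_eq_zero.mp hpr with h | h
      · refine ⟨h, ?_⟩
        rw [h] at hpair
        have : A 0 0 * B 1 1 = 0 := by linarith
        rcases mul_eq_zero.mp this with h' | h'
        · exact absurd h' (ne_of_gt h00)
        · exact h'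
      · refine ⟨?_, h⟩
        rw [h] at hpair
        have : A 1 1 * B 0 0 = 0 := by linarith
        rcases mul_eq_zero.mp this with h' | h'
        · exact absurd h' (ne_of_gt h11)
        · exact h'
    ext i j
    fin_cases i <;> fin_cases j <;>
      simp [hp0.1, hp0.2, hq, hB10]
  · intro hz
    rw [hz]
    simp
end

section
/- Let (Σ,g) be compact without boundary and let u, ũ ∈ C²(Σ). Suppose pointwise n∫_u^{ũ} fΦ ds = Φ(u) ∇(u-ũ)·∇(u+ũ) - |∇ũ|² ∫_u^{ũ} Φ_s ds, where f > 0 and Φ, Φ_u satisfy ΦΦ_u > 0 (so Φ and Φ_u have the same, constant sign and never vanish). Then u ≡ ũ on Σ. -/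
open MeasureTheory intervalIntegral
open scoped Manifold

/-- At a local maximum, the manifold derivative of a real-valued function vanishes. -/
lemma stmt16_mfderiv_localMax {E : Type*} [NormedAddCommGroup E] [NormedSpace ℝ E]
    {S : Type*} [TopologicalSpace S] [ChartedSpace E S]
    (w : S → ℝ) (x : S) (h : IsLocalMax w x) :
    mfderiv 𝓘(ℝ, E) 𝓘(ℝ, ℝ) w x = 0 := by
  by_cases hd : MDifferentiableAt 𝓘(ℝ, E) 𝓘(ℝ, ℝ) w x
  · rw [hd.mfderiv]
    have hloc : IsLocalMax (writtenInExtChartAt 𝓘(ℝ, E) 𝓘(ℝ, ℝ) x w)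
        ((extChartAt 𝓘(ℝ, E) x) x) := by
      have hc : ContinuousAt (extChartAt 𝓘(ℝ, E) x).symm ((extChartAt 𝓘(ℝ, E) x) x) :=
        continuousAt_extChartAt_symm x
      have := hc.eventually (by
        rw [(extChartAt 𝓘(ℝ, E) x).left_inv (mem_extChartAt_source x)]
        exact h)
      filter_upwards [this] with y hy
      simpa [writtenInExtChartAt, chartAt_self_eq,
        (extChartAt 𝓘(ℝ, E) x).left_inv (mem_extChartAt_source x)] using hy
    have h0 := hloc.fderiv_eq_zero
    simp only [modelWithCornersSelf_coe, Set.range_id, fderivWithin_univ]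
    exact h0
  · exact mfderiv_zero_of_not_mdifferentiableAt hd

/-- At a local minimum, the manifold derivative of a real-valued function vanishes. -/
lemma stmt16_mfderiv_localMin {E : Type*} [NormedAddCommGroup E] [NormedSpace ℝ E]
    {S : Type*} [TopologicalSpace S] [ChartedSpace E S]
    (w : S → ℝ) (x : S) (h : IsLocalMin w x) :
    mfderiv 𝓘(ℝ, E) 𝓘(ℝ, ℝ) w x = 0 := by
  by_cases hd : MDifferentiableAt 𝓘(ℝ, E) 𝓘(ℝ, ℝ) w x
  · rw [hd.mfderiv]
    have hloc : IsLocalMin (writtenInExtChartAt 𝓘(ℝ, E) 𝓘(ℝ, ℝ) x w)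
        ((extChartAt 𝓘(ℝ, E) x) x) := by
      have hc : ContinuousAt (extChartAt 𝓘(ℝ, E) x).symm ((extChartAt 𝓘(ℝ, E) x) x) :=
        continuousAt_extChartAt_symm x
      have := hc.eventually (by
        rw [(extChartAt 𝓘(ℝ, E) x).left_inv (mem_extChartAt_source x)]
        exact h)
      filter_upwards [this] with y hy
      simpa [writtenInExtChartAt, chartAt_self_eq,
        (extChartAt 𝓘(ℝ, E) x).left_inv (mem_extChartAt_source x)] using hy
    have h0 := hloc.fderiv_eq_zero
    simp only [modelWithCornersSelf_coe, Set.range_id, fderivWithin_univ]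
    exact h0
  · exact mfderiv_zero_of_not_mdifferentiableAt hd

/-- Sign lemma: `(∫_a^b f Φ) (Φ b - Φ a) > 0` for `a < b` in `J`. -/
lemma stmt16_sign (J : Set ℝ) (hJ : J.OrdConnected) (f Φ : ℝ → ℝ) (hf : ContinuousOn f J)
    (hfpos : ∀ s ∈ J, 0 < f s) (hΦ : ContDiff ℝ 1 Φ)
    (hsign : ∀ s ∈ J, 0 < Φ s * deriv Φ s)
    (a b : ℝ) (ha : a ∈ J) (hb : b ∈ J) (hab : a < b) :
    0 < (∫ s in a..b, f s * Φ s) * (Φ b - Φ a) := by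
  have hsub : Set.Icc a b ⊆ J := hJ.out ha hb
  have hΦc : Continuous Φ := hΦ.continuous
  have hne : ∀ s ∈ Set.Icc a b, Φ s ≠ 0 := fun s hs h0 => by
    have := hsign s (hsub hs); rw [h0] at this; simp at this
  have hdsign : ∀ s ∈ Set.Icc a b, 0 < Φ s * deriv Φ s := fun s hs => hsign s (hsub hs)
  have hconst : (∀ s ∈ Set.Icc a b, 0 < Φ s) ∨ (∀ s ∈ Set.Icc a b, Φ s < 0) := by
    rcases lt_or_gt_of_ne (hne a (Set.left_mem_Icc.2 hab.le)) with hA | hA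
    · right
      intro s hs
      by_contra hle
      have hΦs : 0 < Φ s := lt_of_le_of_ne (not_lt.1 hle) (Ne.symm (hne s hs))
      obtain ⟨z, hz, hz0⟩ := intermediate_value_uIcc (a := a) (b := s)
        (hΦc.continuousOn) (show (0:ℝ) ∈ Set.uIcc (Φ a) (Φ s) from
          Set.mem_uIcc.2 (Or.inl ⟨hA.le, hΦs.le⟩))
      have : z ∈ Set.Icc a b := by
        have : Set.uIcc a s ⊆ Set.Icc a b := by
          rw [Set.uIcc_of_le hs.1]
          exact Set.Icc_subset_Icc le_rfl hs.2
        exact this hz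
      exact hne z this hz0
    · left
      intro s hs
      by_contra hle
      have hΦs : Φ s < 0 := lt_of_le_of_ne (not_lt.1 hle) (hne s hs)
      obtain ⟨z, hz, hz0⟩ := intermediate_value_uIcc (a := a) (b := s)
        (hΦc.continuousOn) (show (0:ℝ) ∈ Set.uIcc (Φ a) (Φ s) from
          Set.mem_uIcc.2 (Or.inr ⟨hΦs.le, hA.le⟩))
      have : z ∈ Set.Icc a b := by
        have : Set.uIcc a s ⊆ Set.Icc a b := by
          rw [Set.uIcc_of_le hs.1]
          exact Set.Icc_subset_Icc le_rfl hs.2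
        exact this hz
      exact hne z this hz0
  have hcf : ContinuousOn (fun s => f s * Φ s) (Set.Icc a b) :=
    (hf.mono hsub).mul hΦc.continuousOn
  have hint : IntervalIntegrable (fun s => f s * Φ s) volume a b := by
    apply ContinuousOn.intervalIntegrable
    rwa [Set.uIcc_of_le hab.le]
  have hΦsub : Φ b - Φ a = ∫ s in a..b, deriv Φ s := by
    rw [intervalIntegral.integral_deriv_eq_sub (fun s _ => hΦ.differentiable one_ne_zero s)]
    · exact ((hΦ.continuous_deriv le_rfl).continuousOn).intervalIntegrable
  rcases hconst with hpos | hneg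
  · have h1 : 0 < ∫ s in a..b, f s * Φ s := by
      apply intervalIntegral.intervalIntegral_pos_of_pos_on hint _ hab
      intro s hs
      exact mul_pos (hfpos s (hsub (Set.mem_Icc_of_Ioo hs))) (hpos s (Set.mem_Icc_of_Ioo hs))
    have h2 : 0 < Φ b - Φ a := by
      rw [hΦsub]
      apply intervalIntegral.intervalIntegral_pos_of_pos_on
        (((hΦ.continuous_deriv le_rfl).continuousOn).intervalIntegrable) _ hab
      intro s hs
      have hs' := Set.mem_Icc_of_Ioo hs
      have := hdsign s hs'
      nlinarith [hpos s hs']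
    positivity
  · have h1 : (∫ s in a..b, f s * Φ s) < 0 := by
      have : 0 < ∫ s in a..b, -(f s * Φ s) := by
        apply intervalIntegral.intervalIntegral_pos_of_pos_on hint.neg _ hab
        intro s hs
        have hs' := Set.mem_Icc_of_Ioo hs
        have := mul_pos (hfpos s (hsub hs')) (neg_pos.2 (hneg s hs'))
        simp only [Pi.neg_apply]
        nlinarith
      rw [intervalIntegral.integral_neg] at this
      linarith
    have h2 : Φ b - Φ a < 0 := by
      have : 0 < ∫ s in a..b, -(deriv Φ s) := by
        apply intervalIntegral.intervalIntegral_pos_of_pos_on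
          (((hΦ.continuous_deriv le_rfl).continuousOn).intervalIntegrable).neg _ hab
        intro s hs
        have hs' := Set.mem_Icc_of_Ioo hs
        have := hdsign s hs'
        simp only [Pi.neg_apply]
        nlinarith [hneg s hs']
      rw [intervalIntegral.integral_neg] at this
      rw [hΦsub]; linarith
    nlinarith

/-- on a compact manifold `S` (without boundary), if `u, ut` are `C²`
functions with values in an interval `J`, `f > 0` on `J`, `Φ` is `C¹` with `Φ Φ' > 0`
on `J`, and pointwise
`n ∫_u^ut f Φ ds = Φ(u) ⟨∇(u-ut), ∇(u+ut)⟩ - |∇ut|² ∫_u^ut Φ' ds`,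
then `u ≡ ut`.  The Riemannian structure is encoded by a nonnegative pairing `g` on each
tangent space together with gradient vector fields `X, Y, Z` of `u-ut`, `u+ut`, `ut`. -/
theorem stmt16 {E : Type*} [NormedAddCommGroup E] [NormedSpace ℝ E]
    {S : Type*} [TopologicalSpace S] [ChartedSpace E S] [CompactSpace S]
    (n : ℕ) (hn : 1 ≤ n) (J : Set ℝ) (hJ : J.OrdConnected)
    (u ut : S → ℝ)
    (hu : ContMDiff 𝓘(ℝ, E) 𝓘(ℝ, ℝ) 2 u) (hut : ContMDiff 𝓘(ℝ, E) 𝓘(ℝ, ℝ) 2 ut)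
    (huJ : ∀ x, u x ∈ J) (hutJ : ∀ x, ut x ∈ J)
    (f Φ : ℝ → ℝ) (hf : ContinuousOn f J) (hfpos : ∀ s ∈ J, 0 < f s)
    (hΦ : ContDiff ℝ 1 Φ) (hsign : ∀ s ∈ J, 0 < Φ s * deriv Φ s)
    (g : (x : S) → TangentSpace 𝓘(ℝ, E) x →L[ℝ] TangentSpace 𝓘(ℝ, E) x →L[ℝ] ℝ)
    (hgpos : ∀ x ξ, 0 ≤ g x ξ ξ)
    (X Y Z : (x : S) → TangentSpace 𝓘(ℝ, E) x)
    (hX : ∀ x ξ, (show ℝ from mfderiv 𝓘(ℝ, E) 𝓘(ℝ, ℝ) (fun y => u y - ut y) x ξ)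
      = g x (X x) ξ)
    (hY : ∀ x ξ, (show ℝ from mfderiv 𝓘(ℝ, E) 𝓘(ℝ, ℝ) (fun y => u y + ut y) x ξ)
      = g x (Y x) ξ)
    (hZ : ∀ x ξ, (show ℝ from mfderiv 𝓘(ℝ, E) 𝓘(ℝ, ℝ) ut x ξ) = g x (Z x) ξ)
    (hident : ∀ x : S,
      (n : ℝ) * ∫ s in u x..ut x, f s * Φ s
        = Φ (u x) * g x (X x) (Y x)
          - g x (Z x) (Z x) * ∫ s in u x..ut x, deriv Φ s) :
    ∀ x, u x = ut x := by
  intro x₀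
  have hwc : Continuous fun y => u y - ut y := hu.continuous.sub hut.continuous
  -- key: at a point where the mfderiv of u - ut vanishes, u = ut
  have key : ∀ x : S, mfderiv 𝓘(ℝ, E) 𝓘(ℝ, ℝ) (fun y => u y - ut y) x = 0 → u x = ut x := by
    intro x h0
    by_contra hne
    have hXY : g x (X x) (Y x) = 0 := by
      have := (hX x (Y x)).symm
      rw [h0] at this
      rw [this]; rfl
    have hid := hident x
    rw [hXY, mul_zero, zero_sub] at hid
    have hΦint : (∫ s in u x..ut x, deriv Φ s) = Φ (ut x) - Φ (u x) := by
      rw [intervalIntegral.integral_deriv_eq_sub (fun s _ => hΦ.differentiable one_ne_zero s)]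
      exact ((hΦ.continuous_deriv le_rfl).continuousOn).intervalIntegrable
    have hprod : 0 < (∫ s in u x..ut x, f s * Φ s) * (Φ (ut x) - Φ (u x)) := by
      rcases lt_or_gt_of_ne hne with h | h
      · exact stmt16_sign J hJ f Φ hf hfpos hΦ hsign _ _ (huJ x) (hutJ x) h
      · have := stmt16_sign J hJ f Φ hf hfpos hΦ hsign _ _ (hutJ x) (huJ x) h
        rw [intervalIntegral.integral_symm (u x) (ut x)] at this
        nlinarith
    have hgZZ := hgpos x (Z x)
    have hn' : (0:ℝ) < n := by exact_mod_cast hn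
    rw [hΦint] at hid
    have h3 : ((n:ℝ) * ∫ s in u x..ut x, f s * Φ s) * (Φ (ut x) - Φ (u x))
        = -(g x (Z x) (Z x) * (Φ (ut x) - Φ (u x))) * (Φ (ut x) - Φ (u x)) := by
      rw [hid]
    nlinarith [mul_pos hn' hprod, mul_nonneg hgZZ (sq_nonneg (Φ (ut x) - Φ (u x)))]
  haveI : Nonempty S := ⟨x₀⟩
  obtain ⟨xM, -, hxM⟩ := isCompact_univ.exists_isMaxOn (Set.univ_nonempty (α := S))
    hwc.continuousOn
  obtain ⟨xm, -, hxm⟩ := isCompact_univ.exists_isMinOn (Set.univ_nonempty (α := S))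
    hwc.continuousOn
  have hM : u xM = ut xM :=
    key xM (stmt16_mfderiv_localMax _ xM (hxM.isLocalMax Filter.univ_mem))
  have hm : u xm = ut xm :=
    key xm (stmt16_mfderiv_localMin _ xm (hxm.isLocalMin Filter.univ_mem))
  have h1 : u x₀ - ut x₀ ≤ u xM - ut xM := hxM (Set.mem_univ x₀)
  have h2 : u xm - ut xm ≤ u x₀ - ut x₀ := hxm (Set.mem_univ x₀)
  rw [hM] at h1
  rw [hm] at h2
  linarith
end

section
/- Let w solve w'' + (n-1)Φ w = 0 on [u₀,u₁] with Φ ≤ 0, w(u₁) > 0, w'(u₁) < 0, and w'(u₁)f(u₁) - w(u₁)f'(u₁) ≤ 0, where f > 0 satisfies f'' + (n-1)Φ f ≤ 0. Then w > 0 on [u₀,u₁] and w'f - wf' ≤ 0 on [u₀,u₁], so w/f is nonincreasing. -/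
/-- mirror case: if `w'' + (n-1)Φw = 0` on `[u₀,u₁]` with `Φ ≤ 0`,
terminal conditions `w(u₁) > 0`, `w'(u₁) < 0`, `w'(u₁)f(u₁) - w(u₁)f'(u₁) ≤ 0`, and
`f > 0` satisfies `f'' + (n-1)Φf ≤ 0`, then `w > 0` and `w'f - wf' ≤ 0` on `[u₀,u₁]`,
so `w/f` is nonincreasing. -/
theorem stmt19 (u₀ u₁ : ℝ) (h01 : u₀ ≤ u₁) (n : ℕ) (hn : 2 ≤ n)
    (w f Φ : ℝ → ℝ) (hw : ContDiff ℝ (⊤ : ℕ∞) w) (hf : ContDiff ℝ (⊤ : ℕ∞) f) (hΦ : Continuous Φ)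
    (hΦle : ∀ u ∈ Set.Icc u₀ u₁, Φ u ≤ 0)
    (hfpos : ∀ u ∈ Set.Icc u₀ u₁, 0 < f u)
    (hODE : ∀ u ∈ Set.Icc u₀ u₁, deriv (deriv w) u + ((n : ℝ) - 1) * Φ u * w u = 0)
    (hstatic : ∀ u ∈ Set.Icc u₀ u₁,
      deriv (deriv f) u + ((n : ℝ) - 1) * Φ u * f u ≤ 0)
    (hw1 : 0 < w u₁) (hw1' : deriv w u₁ < 0)
    (hterm : deriv w u₁ * f u₁ - w u₁ * deriv f u₁ ≤ 0) :
    (∀ u ∈ Set.Icc u₀ u₁, 0 < w u)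
      ∧ (∀ u ∈ Set.Icc u₀ u₁, deriv w u * f u - w u * deriv f u ≤ 0)
      ∧ AntitoneOn (fun u => w u / f u) (Set.Icc u₀ u₁) := by
  have hwd : Differentiable ℝ w := hw.differentiable (by simp)
  have hfd : Differentiable ℝ f := hf.differentiable (by simp)
  have hw'd : Differentiable ℝ (deriv w) :=
    ((contDiff_infty_iff_deriv.mp (hw.of_le (by simp))).2).differentiable (by simp)
  have hf'd : Differentiable ℝ (deriv f) :=
    ((contDiff_infty_iff_deriv.mp (hf.of_le (by simp))).2).differentiable (by simp)
  have hn1 : (1:ℝ) ≤ (n:ℝ) - 1 := by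
    have : (2:ℝ) ≤ (n:ℝ) := by exact_mod_cast hn
    linarith
  -- Positivity of w on [u₀, u₁]
  have hwpos : ∀ u ∈ Set.Icc u₀ u₁, 0 < w u := by
    by_contra hcon
    push_neg at hcon
    obtain ⟨c₀, hc₀, hc₀w⟩ := hcon
    set K : Set ℝ := {u | u ∈ Set.Icc u₀ u₁ ∧ w u ≤ 0} with hKdef
    have hKne : K.Nonempty := ⟨c₀, hc₀, hc₀w⟩
    have hKcl : IsClosed K := by
      have : K = Set.Icc u₀ u₁ ∩ w ⁻¹' Set.Iic 0 := by
        ext x; simp [hKdef]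
      rw [this]
      exact isClosed_Icc.inter (isClosed_Iic.preimage hwd.continuous)
    have hKbdd : BddAbove K := ⟨u₁, fun x hx => hx.1.2⟩
    have hKcomp : IsCompact K :=
      isCompact_Icc.of_isClosed_subset hKcl (fun x hx => hx.1)
    set c := sSup K with hcdef
    have hcK : c ∈ K := hKcomp.sSup_mem hKne
    have hcIcc : c ∈ Set.Icc u₀ u₁ := hcK.1
    have hcw : w c ≤ 0 := hcK.2
    have hclt : c < u₁ := by
      rcases lt_or_eq_of_le hcIcc.2 with h | h
      · exact h
      · exact absurd (h ▸ hcw) (not_le.mpr hw1)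
    -- w > 0 strictly to the right of c
    have hpos_right : ∀ u, c < u → u ≤ u₁ → 0 < w u := by
      intro u hu1 hu2
      by_contra hu
      push_neg at hu
      have : u ∈ K := ⟨⟨le_trans hcIcc.1 hu1.le, hu2⟩, hu⟩
      exact absurd (le_csSup hKbdd this) (not_le.mpr hu1)
    -- hence w c ≥ 0 by continuity from the right
    have hwc0 : 0 ≤ w c := by
      have htend : Filter.Tendsto w (nhdsWithin c (Set.Ioi c)) (nhds (w c)) :=
        (hwd.continuous.continuousAt).continuousWithinAt
      refine ge_of_tendsto htend ?_
      filter_upwards [Ioo_mem_nhdsGT_of_mem (Set.mem_Ico.mpr ⟨le_refl c, hclt⟩)] with x hx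
      exact (hpos_right x hx.1 hx.2.le).le
    have hwnonneg : ∀ u ∈ Set.Icc c u₁, 0 ≤ w u := by
      intro u hu
      rcases eq_or_lt_of_le hu.1 with h | h
      · exact h ▸ hwc0
      · exact (hpos_right u h hu.2).le
    -- deriv w is monotone on [c, u₁]
    have hsub : Set.Icc c u₁ ⊆ Set.Icc u₀ u₁ :=
      Set.Icc_subset_Icc hcIcc.1 le_rfl
    have hmono : MonotoneOn (deriv w) (Set.Icc c u₁) := by
      apply monotoneOn_of_deriv_nonneg (convex_Icc c u₁)
        hw'd.continuous.continuousOn hw'd.differentiableOn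
      intro x hx
      have hx' : x ∈ Set.Icc c u₁ := interior_subset hx
      have hode := hODE x (hsub hx')
      have hΦx : Φ x ≤ 0 := hΦle x (hsub hx')
      have hwx : 0 ≤ w x := hwnonneg x hx'
      nlinarith [mul_nonneg (mul_nonneg (by linarith : (0:ℝ) ≤ (n:ℝ) - 1)
        (by linarith : (0:ℝ) ≤ -Φ x)) hwx]
    have hderivneg : ∀ x ∈ Set.Icc c u₁, deriv w x < 0 := by
      intro x hx
      have := hmono hx (Set.mem_Icc.mpr ⟨hclt.le, le_rfl⟩) hx.2
      linarith
    have hanti : StrictAntiOn w (Set.Icc c u₁) := by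
      apply strictAntiOn_of_deriv_neg (convex_Icc c u₁) hwd.continuous.continuousOn
      intro x hx
      exact hderivneg x (interior_subset hx)
    have : w u₁ < w c :=
      hanti (Set.mem_Icc.mpr ⟨le_rfl, hclt.le⟩) (Set.mem_Icc.mpr ⟨hclt.le, le_rfl⟩) hclt
    linarith
  -- the Wronskian-type quantity
  set g : ℝ → ℝ := fun u => deriv w u * f u - w u * deriv f u with hgdef
  have hgd : Differentiable ℝ g := (hw'd.mul hfd).sub (hwd.mul hf'd)
  have hgderiv : ∀ u, deriv g u
      = deriv (deriv w) u * f u - w u * deriv (deriv f) u := by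
    intro u
    have h1 : deriv g u = (deriv (deriv w) u * f u + deriv w u * deriv f u)
        - (deriv w u * deriv f u + w u * deriv (deriv f) u) := by
      rw [hgdef]
      rw [deriv_fun_sub (f := fun y => deriv w y * f y) (g := fun y => w y * deriv f y) ((hw'd u).mul (hfd u)) ((hwd u).mul (hf'd u)),
          deriv_fun_mul (hw'd u) (hfd u), deriv_fun_mul (hwd u) (hf'd u)]
    rw [h1]; ring
  have hgmono : MonotoneOn g (Set.Icc u₀ u₁) := by
    apply monotoneOn_of_deriv_nonneg (convex_Icc u₀ u₁)
      hgd.continuous.continuousOn hgd.differentiableOn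
    intro x hx
    have hx' : x ∈ Set.Icc u₀ u₁ := interior_subset hx
    rw [hgderiv x]
    have hode := hODE x hx'
    have hst := hstatic x hx'
    have hwx := hwpos x hx'
    have hkey : w x * (deriv (deriv f) x + ((n:ℝ) - 1) * Φ x * f x) ≤ 0 :=
      mul_nonpos_of_nonneg_of_nonpos hwx.le hst
    have h2 : (deriv (deriv w) x + ((n:ℝ) - 1) * Φ x * w x) * f x = 0 := by
      rw [hode]; ring
    nlinarith [hkey, h2]
  have hgle : ∀ u ∈ Set.Icc u₀ u₁, deriv w u * f u - w u * deriv f u ≤ 0 := by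
    intro u hu
    have h1 : g u ≤ g u₁ := hgmono hu (Set.mem_Icc.mpr ⟨h01, le_rfl⟩) hu.2
    have h2 : g u₁ ≤ 0 := hterm
    simpa [hgdef] using le_trans h1 h2
  refine ⟨hwpos, hgle, ?_⟩
  apply antitoneOn_of_deriv_nonpos (convex_Icc u₀ u₁)
  · exact (hwd.continuous.continuousOn).div (hfd.continuous.continuousOn)
      (fun x hx => (hfpos x hx).ne')
  · intro x hx
    have hx' : x ∈ Set.Icc u₀ u₁ := interior_subset hx
    exact ((hwd x).div (hfd x) (hfpos x hx').ne').differentiableWithinAt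
  · intro x hx
    have hx' : x ∈ Set.Icc u₀ u₁ := interior_subset hx
    have hfx : f x ≠ 0 := (hfpos x hx').ne'
    rw [deriv_fun_div (hwd x) (hfd x) hfx]
    apply div_nonpos_of_nonpos_of_nonneg (hgle x hx')
    positivity
end
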